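/- Let (X,d,μ) be a complete connected doubling metric measure space and 0 < s < 1. Then for every z ∈ X and almost every r > 0 (with respect to Lebesgue measure on (0,∞)), the ball B(z,r) has finite nonlocal s-perimeter: P_s(B(z,r)) := ∫_{B(z,r)} ∫_{X∖B(z,r)} 1/(μ(B_{x,y}) d(x,y)^s) dμ(x) dμ(y) < ∞. -/

import Mathlib

/-!
For `y ∈ B(z,r)`, summing the doubling estimate over the dyadic annuli around `y` gives
`∫_{X∖B(z,r)} k(x,y) dμ(x) ≤ K (r - d(y,z))^{-s}` with `K = C/(1 - 2^{-s})`. The layer-cake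
formula turns this into `P_s(B(z,r)) ≤ Φ(r) := ∫_0^∞ μ(B(z,r)) - μ(B(z, r - (K/t)^{1/s})) dt`,
and by Tonelli and translation invariance `∫_0^R Φ ≤ μ(B(z,R)) ∫_0^∞ min(R, (K/t)^{1/s}) dt`,
which is finite because `1/s > 1`. So `Φ(r)`, hence `P_s(B(z,r))`, is finite for a.e. `r`.

The σ-algebra on `X` is arbitrary, so balls and the kernel need not be measurable and the
integrals over `X` are lower integrals: every estimate on them goes through a measurable
minorant with the same integral.
-/

open MeasureTheory Metric
open scoped ENNReal

/-- The kernel `1/(μ(B_{x,y}) d(x,y)^s)` where `B_{x,y} = B(x,d(x,y)) ∪ B(y,d(y,x))`. -/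
noncomputable def ker {X : Type*} [MetricSpace X] [MeasurableSpace X]
    (μ : Measure X) (s : ℝ) (x y : X) : ℝ≥0∞ :=
  1 / (μ (ball x (dist x y) ∪ ball y (dist y x)) * ENNReal.ofReal (dist x y ^ s))

/-- The nonlocal `s`-perimeter `P_s(E) = ∫_E ∫_{X∖E} dμ dμ /(μ(B_{x,y}) d(x,y)^s)`. -/
noncomputable def sPerimeter {X : Type*} [MetricSpace X] [MeasurableSpace X]
    (μ : Measure X) (s : ℝ) (E : Set X) : ℝ≥0∞ :=
  ∫⁻ y in E, ∫⁻ x in Eᶜ, ker μ s x y ∂μ ∂μ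

open Set

section LowerIntegral

variable {X : Type*} [MeasurableSpace X]

theorem ae_restrict_of_forall_mem_of_measurableSet_setOf {μ : Measure X} {A : Set X}
    {p : X → Prop} (hp : MeasurableSet {x | p x}) (h : ∀ x ∈ A, p x) :
    ∀ᵐ x ∂μ.restrict A, p x := by
  rw [ae_iff]
  show μ.restrict A {x | p x}ᶜ = 0
  rw [Measure.restrict_apply hp.compl]
  exact measure_mono_null (fun x ⟨hx, hxA⟩ => hx (h x hxA)) measure_empty

theorem setLIntegral_le_mul_of_forall_le (μ : Measure X) {A : Set X} {f : X → ℝ≥0∞}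
    {c : ℝ≥0∞} (hf : ∀ x ∈ A, f x ≤ c) : ∫⁻ x in A, f x ∂μ ≤ c * μ A := by
  obtain ⟨g, hg, hgf, heq⟩ := exists_measurable_le_lintegral_eq (μ.restrict A) f
  have hgc : ∀ᵐ x ∂μ.restrict A, g x ≤ c :=
    ae_restrict_of_forall_mem_of_measurableSet_setOf (measurableSet_le hg measurable_const)
      fun x hx => (hgf x).trans (hf x hx)
  calc ∫⁻ x in A, f x ∂μ = ∫⁻ x in A, g x ∂μ := heq
    _ ≤ ∫⁻ _ in A, c ∂μ := lintegral_mono_ae hgc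
    _ = c * μ A := setLIntegral_const A c

theorem setLIntegral_le_lintegral_measure_sub (μ : Measure X) {A : Set X} (hA : μ A ≠ ⊤)
    {f : X → ℝ≥0∞} (hfA : ∀ x ∈ A, f x ≠ ⊤) (C : ℝ → Set X) (hCA : ∀ t, 0 < t → C t ⊆ A)
    (hfC : ∀ t, 0 < t → ∀ x ∈ C t, f x ≤ ENNReal.ofReal t) :
    ∫⁻ x in A, f x ∂μ ≤ ∫⁻ t in Ioi 0, (μ A - μ (C t)) := by
  obtain ⟨g, hg, hgf, heq⟩ := exists_measurable_le_lintegral_eq (μ.restrict A) f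
  have hg_fin : ∀ᵐ x ∂μ.restrict A, g x ≠ ⊤ :=
    ae_restrict_of_forall_mem_of_measurableSet_setOf (hg (measurableSet_singleton ⊤)).compl
      fun x hx => ne_top_of_le_ne_top (hfA x hx) (hgf x)
  have hlevel : ∀ t ∈ Ioi (0 : ℝ),
      μ.restrict A {x | t < (g x).toReal} ≤ μ A - μ (C t) := by
    intro t ht
    have hmeas : MeasurableSet {x | t < (g x).toReal} :=
      measurableSet_lt measurable_const hg.ennreal_toReal
    have hC : C t ⊆ A \ {x | t < (g x).toReal} := fun x hx =>
      ⟨hCA t ht hx, fun hlt => hlt.not_ge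
        (ENNReal.toReal_le_of_le_ofReal (le_of_lt ht) ((hgf x).trans (hfC t ht x hx)))⟩
    -- The level sets of `g` are measurable, so they split the possibly non-measurable `A`.
    rw [Measure.restrict_apply hmeas, ← measure_inter_add_sdiff A hmeas, inter_comm]
    refine ENNReal.le_sub_of_add_le_right (ne_top_of_le_ne_top hA (measure_mono (hCA t ht))) ?_
    gcongr
  calc ∫⁻ x in A, f x ∂μ = ∫⁻ x in A, g x ∂μ := heq
    _ = ∫⁻ x in A, ENNReal.ofReal (g x).toReal ∂μ :=
        lintegral_congr_ae (hg_fin.mono fun x hx => (ENNReal.ofReal_toReal hx).symm)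
    _ = ∫⁻ t in Ioi 0, μ.restrict A {x | t < (g x).toReal} :=
        lintegral_eq_lintegral_meas_lt _ (ae_of_all _ fun _ => ENNReal.toReal_nonneg)
          hg.ennreal_toReal.aemeasurable
    _ ≤ ∫⁻ t in Ioi 0, (μ A - μ (C t)) := setLIntegral_mono' measurableSet_Ioi hlevel

end LowerIntegral

section Shell

theorem lintegral_Ioc_sub_comp_sub_le {G : ℝ → ℝ≥0∞} (hG : Monotone G) {a c ε : ℝ}
    (hε : 0 ≤ ε) (hc : G c ≠ ⊤) :
    ∫⁻ r in Ioc a c, (G r - G (r - ε)) ≤ G c * ENNReal.ofReal ε := by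
  have hshift : ∫⁻ r in Ioc a c, G (r - ε) = ∫⁻ r in Ioc (a - ε) (c - ε), G r := by
    simpa [preimage_sub_const_Ioc] using (measurePreserving_sub_right volume ε)
      |>.setLIntegral_comp_preimage (s := Ioc (a - ε) (c - ε)) measurableSet_Ioc hG.measurable
  have hfin : ∫⁻ r in Ioc a c, G (r - ε) ≠ ⊤ :=
    ne_top_of_le_ne_top (ENNReal.mul_ne_top hc measure_Ioc_lt_top.ne)
      (setLIntegral_le_mul_of_forall_le _ fun r hr => hG (by linarith [hr.2]))
  have hcover : Ioc a c ⊆ Ioc (a - ε) (c - ε) ∪ Ioc (c - ε) c := by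
    intro r hr
    rcases le_or_gt r (c - ε) with h | h
    · exact .inl ⟨by linarith [hr.1], h⟩
    · exact .inr ⟨h, hr.2⟩
  rw [lintegral_sub' (g := fun r => G (r - ε))
    (hG.measurable.comp (measurable_sub_const ε)).aemeasurable hfin
    (ae_of_all _ fun r => hG (by linarith)), tsub_le_iff_left, hshift]
  calc ∫⁻ r in Ioc a c, G r
      ≤ ∫⁻ r in Ioc (a - ε) (c - ε) ∪ Ioc (c - ε) c, G r := lintegral_mono_set hcover
    _ ≤ (∫⁻ r in Ioc (a - ε) (c - ε), G r) + ∫⁻ r in Ioc (c - ε) c, G r :=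
        lintegral_union_le G _ _
    _ ≤ (∫⁻ r in Ioc (a - ε) (c - ε), G r) + G c * ENNReal.ofReal ε := by
        gcongr
        simpa using setLIntegral_le_mul_of_forall_le volume fun r (hr : r ∈ Ioc (c - ε) c) =>
          hG hr.2

noncomputable def shellIntegral (G : ℝ → ℝ≥0∞) (K s r : ℝ) : ℝ≥0∞ :=
  ∫⁻ t in Ioi 0, (G r - G (r - (K / t) ^ s⁻¹))

variable {G : ℝ → ℝ≥0∞}

theorem Monotone.measurable_shellIntegrand (hG : Monotone G) (K s : ℝ) :
    Measurable fun p : ℝ × ℝ => G p.1 - G (p.1 - (K / p.2) ^ s⁻¹) := by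
  have := hG.measurable
  fun_prop

theorem Monotone.measurable_shellIntegral (hG : Monotone G) (K s : ℝ) :
    Measurable (shellIntegral G K s) :=
  (hG.measurable_shellIntegrand K s).lintegral_prod_right'

theorem Monotone.setLIntegral_shellIntegral_lt_top (hG : Monotone G) {K s R : ℝ} (hK : 0 ≤ K)
    (hs : 0 < s) (hs1 : s < 1) (hR : G R ≠ ⊤) :
    ∫⁻ r in Ioc 0 R, shellIntegral G K s r < ⊤ := by
  have hρ : ∀ t ∈ Ioi (0 : ℝ), 0 ≤ (K / t) ^ s⁻¹ := fun t ht =>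
    Real.rpow_nonneg (div_nonneg hK (le_of_lt ht)) _
  have hsmall : ∀ t, ∫⁻ r in Ioc 0 R, (G r - G (r - (K / t) ^ s⁻¹)) ≤
      G R * ENNReal.ofReal R := fun t => by
    simpa using setLIntegral_le_mul_of_forall_le volume fun r (hr : r ∈ Ioc 0 R) =>
      tsub_le_self.trans (hG hr.2)
  have hlarge : ∀ t ∈ Ioi (0 : ℝ), ∫⁻ r in Ioc 0 R, (G r - G (r - (K / t) ^ s⁻¹)) ≤
      G R * ENNReal.ofReal ((K / t) ^ s⁻¹) := fun t ht =>
    lintegral_Ioc_sub_comp_sub_le hG (hρ t ht) hR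
  have htail : ∫⁻ t in Ioi 1, ENNReal.ofReal ((K / t) ^ s⁻¹) < ⊤ := by
    have h : IntegrableOn (fun t : ℝ => K ^ s⁻¹ * t ^ (-s⁻¹)) (Ioi 1) :=
      (integrableOn_Ioi_rpow_of_lt (neg_lt_neg ((one_lt_inv₀ hs).2 hs1)) one_pos).const_mul _
    refine (h.congr_fun (fun t (ht : 1 < t) => ?_) measurableSet_Ioi).lintegral_lt_top
    rw [Real.div_rpow hK (by linarith), Real.rpow_neg (by linarith), div_eq_mul_inv]
  unfold shellIntegral
  rw [lintegral_lintegral_swap (hG.measurable_shellIntegrand K s).aemeasurable,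
    ← Ioc_union_Ioi_eq_Ioi zero_le_one]
  calc _ ≤ (∫⁻ t in Ioc 0 1, ∫⁻ r in Ioc 0 R, (G r - G (r - (K / t) ^ s⁻¹))) +
          ∫⁻ t in Ioi 1, ∫⁻ r in Ioc 0 R, (G r - G (r - (K / t) ^ s⁻¹)) :=
        lintegral_union_le _ _ _
    _ ≤ (∫⁻ _ in Ioc 0 1, G R * ENNReal.ofReal R) +
          ∫⁻ t in Ioi 1, G R * ENNReal.ofReal ((K / t) ^ s⁻¹) :=
        add_le_add (lintegral_mono hsmall) (setLIntegral_mono' measurableSet_Ioi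
          fun t ht => hlarge t (mem_Ioi.2 (lt_trans one_pos ht)))
    _ < ⊤ := by
        rw [setLIntegral_const, lintegral_const_mul' _ _ hR]
        exact ENNReal.add_lt_top.2 ⟨ENNReal.mul_lt_top (ENNReal.mul_lt_top hR.lt_top
          ENNReal.ofReal_lt_top) measure_Ioc_lt_top, ENNReal.mul_lt_top hR.lt_top htail⟩

end Shell

section Doubling

variable {X : Type*} [MetricSpace X] [MeasurableSpace X]

def IsDoublingWith (μ : Measure X) (C : ℝ) : Prop :=
  ∀ (x : X) (r : ℝ), 0 < r →
    0 < μ (ball x r) ∧ μ (ball x r) < ⊤ ∧ μ (ball x (2 * r)) ≤ ENNReal.ofReal C * μ (ball x r)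

variable {μ : Measure X} {Cμ s : ℝ}

theorem ker_le_of_le_dist (hs : 0 ≤ s) {x y : X} {t : ℝ} (ht : 0 ≤ t) (h : t ≤ dist x y) :
    ker μ s x y ≤ (μ (ball y t) * ENNReal.ofReal (t ^ s))⁻¹ := by
  rw [ker, one_div]
  refine ENNReal.inv_le_inv.2 (mul_le_mul' (measure_mono ?_) ?_)
  · exact subset_union_of_subset_right (ball_subset_ball (by rwa [dist_comm])) _
  · exact ENNReal.ofReal_le_ofReal (Real.rpow_le_rpow ht h hs)

theorem setLIntegral_ker_annulus_le (hdoub : IsDoublingWith μ Cμ) (hs : 0 ≤ s) (y : X)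
    {t : ℝ} (ht : 0 < t) :
    ∫⁻ x in {x | t ≤ dist x y ∧ dist x y < 2 * t}, ker μ s x y ∂μ ≤
      ENNReal.ofReal (Cμ * t ^ (-s)) := by
  obtain ⟨hpos, hfin, hdbl⟩ := hdoub y t ht
  have hts : 0 < t ^ s := Real.rpow_pos_of_pos ht s
  calc _ ≤ (μ (ball y t) * ENNReal.ofReal (t ^ s))⁻¹ *
          μ {x | t ≤ dist x y ∧ dist x y < 2 * t} :=
        setLIntegral_le_mul_of_forall_le μ fun x hx => ker_le_of_le_dist hs ht.le hx.1
    _ ≤ (μ (ball y t) * ENNReal.ofReal (t ^ s))⁻¹ * (ENNReal.ofReal Cμ * μ (ball y t)) := by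
        gcongr
        exact (measure_mono fun x hx => mem_ball.2 hx.2).trans hdbl
    _ = ENNReal.ofReal Cμ * (ENNReal.ofReal (t ^ s))⁻¹ * ((μ (ball y t))⁻¹ * μ (ball y t)) := by
        rw [ENNReal.mul_inv (.inl hpos.ne') (.inl hfin.ne)]
        ring
    _ = ENNReal.ofReal (Cμ * t ^ (-s)) := by
        rw [ENNReal.inv_mul_cancel hpos.ne' hfin.ne, mul_one, Real.rpow_neg ht.le,
          ENNReal.ofReal_mul' (inv_nonneg.2 hts.le), ENNReal.ofReal_inv_of_pos hts]

theorem setLIntegral_dist_ge_ker_le (hdoub : IsDoublingWith μ Cμ) (hs : 0 < s) (y : X) {δ : ℝ}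
    (hδ : 0 < δ) :
    ∫⁻ x in {x | δ ≤ dist x y}, ker μ s x y ∂μ ≤
      ENNReal.ofReal (Cμ / (1 - 2 ^ (-s)) * δ ^ (-s)) := by
  set q : ℝ := 2 ^ (-s)
  have hq0 : 0 ≤ q := by positivity
  have hq1 : q < 1 := Real.rpow_lt_one_of_one_lt_of_neg one_lt_two (neg_lt_zero.2 hs)
  have hcover : {x | δ ≤ dist x y} ⊆
      ⋃ k : ℕ, {x | 2 ^ k * δ ≤ dist x y ∧ dist x y < 2 * (2 ^ k * δ)} := by
    intro x hx
    obtain ⟨k, hk1, hk2⟩ := exists_nat_pow_near ((one_le_div hδ).2 hx) one_lt_two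
    refine mem_iUnion.2 ⟨k, (le_div_iff₀ hδ).1 hk1, ?_⟩
    rw [div_lt_iff₀ hδ, pow_succ] at hk2
    linarith
  have hdyadic : ∀ k : ℕ, (2 ^ k * δ) ^ (-s) = δ ^ (-s) * q ^ k := fun k => by
    rw [Real.mul_rpow (by positivity) hδ.le, ← Real.rpow_natCast_mul zero_le_two, mul_comm,
      mul_comm (k : ℝ), Real.rpow_mul_natCast zero_le_two]
  calc _ ≤ ∫⁻ x in ⋃ k : ℕ, {x | 2 ^ k * δ ≤ dist x y ∧ dist x y < 2 * (2 ^ k * δ)},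
          ker μ s x y ∂μ := lintegral_mono_set hcover
    _ ≤ ∑' k : ℕ, ∫⁻ x in {x | 2 ^ k * δ ≤ dist x y ∧ dist x y < 2 * (2 ^ k * δ)},
          ker μ s x y ∂μ := lintegral_iUnion_le _ _
    _ ≤ ∑' k : ℕ, ENNReal.ofReal (Cμ * (2 ^ k * δ) ^ (-s)) :=
        ENNReal.tsum_le_tsum fun k => setLIntegral_ker_annulus_le hdoub hs.le y (by positivity)
    _ = ENNReal.ofReal Cμ * ENNReal.ofReal (∑' k : ℕ, δ ^ (-s) * q ^ k) := by
        simp_rw [hdyadic, ENNReal.ofReal_mul' (by positivity : 0 ≤ δ ^ (-s) * q ^ _)]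
        rw [ENNReal.tsum_mul_left, ENNReal.ofReal_tsum_of_nonneg (fun k => by positivity)
          ((summable_geometric_of_lt_one hq0 hq1).mul_left _)]
    _ = ENNReal.ofReal (Cμ / (1 - q) * δ ^ (-s)) := by
        rw [tsum_mul_left, tsum_geometric_of_lt_one hq0 hq1,
          ← ENNReal.ofReal_mul' (by have := sub_pos.2 hq1; positivity)]
        ring_nf

theorem setLIntegral_compl_ball_ker_le (hdoub : IsDoublingWith μ Cμ) (hs : 0 < s) {z y : X}
    {r : ℝ} (hy : y ∈ ball z r) :
    ∫⁻ x in (ball z r)ᶜ, ker μ s x y ∂μ ≤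
      ENNReal.ofReal (Cμ / (1 - 2 ^ (-s)) * (r - dist y z) ^ (-s)) := by
  refine (lintegral_mono_set fun x hx => ?_).trans
    (setLIntegral_dist_ge_ker_le hdoub hs y (sub_pos.2 (mem_ball.1 hy)))
  rw [mem_compl_iff, mem_ball, not_lt] at hx
  show r - dist y z ≤ dist x y
  linarith [dist_triangle x y z]

theorem sPerimeter_ball_le_shellIntegral (hdoub : IsDoublingWith μ Cμ) (hC : 0 < Cμ)
    (hs : 0 < s) (z : X) {r : ℝ} (hr : 0 < r) :
    sPerimeter μ s (ball z r) ≤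
      shellIntegral (fun u => μ (ball z u)) (Cμ / (1 - 2 ^ (-s))) s r := by
  set K := Cμ / (1 - 2 ^ (-s))
  have hK : 0 < K := div_pos hC
    (sub_pos.2 (Real.rpow_lt_one_of_one_lt_of_neg one_lt_two (neg_lt_zero.2 hs)))
  refine setLIntegral_le_lintegral_measure_sub μ (hdoub z r hr).2.1.ne
    (fun y hy => ne_top_of_le_ne_top ENNReal.ofReal_ne_top
      (setLIntegral_compl_ball_ker_le hdoub hs hy))
    (fun t => ball z (r - (K / t) ^ s⁻¹))
    (fun t ht => ball_subset_ball (sub_le_self _ (Real.rpow_nonneg (div_pos hK ht).le _)))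
    (fun t ht y hy => ?_)
  have hρ : 0 < (K / t) ^ s⁻¹ := Real.rpow_pos_of_pos (div_pos hK ht) _
  have hy' : (K / t) ^ s⁻¹ < r - dist y z := by rw [mem_ball] at hy; linarith
  calc _ ≤ ENNReal.ofReal (K * (r - dist y z) ^ (-s)) :=
        setLIntegral_compl_ball_ker_le hdoub hs (ball_subset_ball (sub_le_self _ hρ.le) hy)
    _ ≤ ENNReal.ofReal (K * ((K / t) ^ s⁻¹) ^ (-s)) :=
        ENNReal.ofReal_le_ofReal (mul_le_mul_of_nonneg_left
          (Real.rpow_le_rpow_of_nonpos hρ hy'.le (neg_nonpos.2 hs.le)) hK.le)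
    _ = ENNReal.ofReal t := by
        rw [← Real.rpow_mul (div_pos hK ht).le, inv_mul_eq_div, neg_div, div_self hs.ne',
          Real.rpow_neg_one, inv_div, mul_div_cancel₀ _ hK.ne']

end Doubling

theorem stmt12_general {X : Type*} [MetricSpace X] [MeasurableSpace X]
    (μ : Measure X) (Cμ : ℝ) (hC : 1 ≤ Cμ)
    (hdoub : ∀ (x : X) (r : ℝ), 0 < r →
      0 < μ (ball x r) ∧ μ (ball x r) < ⊤ ∧
        μ (ball x (2 * r)) ≤ ENNReal.ofReal Cμ * μ (ball x r))
    (s : ℝ) (hs : 0 < s) (hs1 : s < 1) :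
    ∀ z : X, ∀ᵐ r ∂(volume.restrict (Set.Ioi (0 : ℝ))),
      sPerimeter μ s (ball z r) < ⊤ := by
  intro z
  have hG : Monotone fun u => μ (ball z u) := fun _ _ h => measure_mono (ball_subset_ball h)
  have hK : 0 ≤ Cμ / (1 - 2 ^ (-s)) := div_nonneg (by linarith)
    (sub_nonneg.2 (Real.rpow_le_one_of_one_le_of_nonpos one_le_two (neg_nonpos.2 hs.le)))
  have hfinite : ∀ n : ℕ, ∀ᵐ r ∂(volume.restrict (Ioc 0 ((n : ℝ) + 1))),
      shellIntegral (fun u => μ (ball z u)) (Cμ / (1 - 2 ^ (-s))) s r < ⊤ := fun n =>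
    ae_lt_top' (hG.measurable_shellIntegral _ s).aemeasurable
      (hG.setLIntegral_shellIntegral_lt_top hK hs hs1 (hdoub z _ (by positivity)).2.1.ne).ne
  have hIoi : ⋃ n : ℕ, Ioc (0 : ℝ) ((n : ℝ) + 1) = Ioi 0 :=
    iUnion_Ioc_eq_Ioi_self_iff.2 fun x _ => (exists_nat_ge x).imp fun n hn => by linarith
  rw [← hIoi, ae_restrict_iUnion_iff]
  refine fun n => (hfinite n).mp (ae_restrict_of_forall_mem measurableSet_Ioc fun r hr hΦ => ?_)
  exact (sPerimeter_ball_le_shellIntegral hdoub (by linarith) hs z hr.1).trans_lt hΦ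

/-- In a complete connected doubling metric measure space, for every `z` and almost every
`r > 0`, the ball `B(z,r)` has finite nonlocal `s`-perimeter. -/
theorem stmt12 {X : Type*} [MetricSpace X] [MeasurableSpace X]
    [CompleteSpace X] [ConnectedSpace X]
    (μ : Measure X) (Cμ : ℝ) (hC : 1 ≤ Cμ)
    (hdoub : ∀ (x : X) (r : ℝ), 0 < r →
      0 < μ (ball x r) ∧ μ (ball x r) < ⊤ ∧
        μ (ball x (2 * r)) ≤ ENNReal.ofReal Cμ * μ (ball x r))
    (s : ℝ) (hs : 0 < s) (hs1 : s < 1) :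
    ∀ z : X, ∀ᵐ r ∂(volume.restrict (Set.Ioi (0 : ℝ))),
      sPerimeter μ s (ball z r) < ⊤ :=
  stmt12_general μ Cμ hC hdoub s hs hs1
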